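/- Let f be a self-reciprocal irreducible polynomial over F_2 of even degree d dividing x^n - 1 (n odd), N = 2^λ n, and 2 ≤ s ≤ 2^λ. If a(x)a(x^{N-1}) ≡ 1 (mod f(x)^{s-1}), and b(x) ≡ (a(x)a(x^{N-1}) - 1)/f(x)^{s-1} (mod f(x)), then b(x^{-1}) ≡ x^{(s-1)d} b(x) (mod f(x)), and consequently x^{(s-1)d/2} b(x) lies in the subfield of F_2[x]/⟨f(x)⟩ of order 2^{d/2}. -/

import Mathlib

/-!
Write `σ p = p(X^{N-1})`. Since `f^s ∣ (X^n - 1)^{2^λ} = X^N - 1`, the root `x` of `f` in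
`F_2[X]/(f^s)` satisfies `x^N = 1`, so `(σ p)(x) = p(x⁻¹)`; self-reciprocity reads
`f(x⁻¹) x^d = f(x)`. Evaluating `a σa - 1 = q f^{s-1}` at `x` and at `x⁻¹` and comparing gives
`(x^{(s-1)d} q(x) - q(x⁻¹)) f(x)^{s-1} = 0`, i.e. `f ∣ X^{(s-1)d} q - σ q`; the same holds for `b`
because `f(x⁻¹) = 0`.

In the field `K = F_2[X]/(f)` the root `ζ` and `ζ⁻¹` are conjugate, so `ζ ↦ ζ⁻¹` extends to an
automorphism of order at most 2 in the Galois group, which is cyclic of order `d` and generated by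
the Frobenius. It is not the identity (otherwise `ζ = ±1` and `d = 1`), hence it is
`β ↦ β^{2^{d/2}}`, and then
`(ζ^{(s-1)d/2} b(ζ))^{2^{d/2}} = ζ^{-(s-1)d/2} b(ζ⁻¹) = ζ^{(s-1)d/2} b(ζ)`.
-/

open Polynomial

section Reciprocal

variable {R S : Type*} [CommRing R] [CommRing S] [Algebra R S] {f : R[X]}

theorem aeval_mul_pow_natDegree_of_reverse_eq (hf : f.reverse = f) {x y : S} (hxy : x * y = 1) :
    aeval y f * x ^ f.natDegree = aeval x f := by
  let := invertibleOfRightInverse x y hxy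
  have := eval₂_reverse_mul_pow (algebraMap R S) x f
  rwa [hf, invOf_eq_right_inv hxy] at this

theorem aeval_eq_zero_of_reverse_eq (hf : f.reverse = f) {x y : S} (hxy : x * y = 1)
    (hx : aeval x f = 0) : aeval y f = 0 := by
  have := aeval_mul_pow_natDegree_of_reverse_eq hf hxy
  rwa [hx, ((IsUnit.of_mul_eq_one y hxy).pow _).mul_left_eq_zero] at this

end Reciprocal

theorem pow_expChar_pow_dvd_X_pow_mul_sub_one {R : Type*} [CommRing R] (p : ℕ) [ExpChar R p]
    {f : R[X]} {n : ℕ} (h : f ∣ X ^ n - 1) (l : ℕ) : f ^ p ^ l ∣ X ^ (p ^ l * n) - 1 :=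
  (pow_dvd_pow_of_dvd h _).trans <| dvd_of_eq <| by
    rw [sub_pow_expChar_pow, one_pow, ← pow_mul, mul_comm]

theorem pow_mul_aeval_sub_aeval_mul_aeval_pow_eq_zero {R S : Type*} [CommRing R] [CommRing S]
    [Algebra R S] {f a q : R[X]} {m N : ℕ} (hN : 0 < N) (hf : f.reverse = f)
    (hq : a * a.comp (X ^ (N - 1)) - 1 = q * f ^ m) {x : S} (hx : x ^ N = 1) :
    (x ^ (m * f.natDegree) * aeval x q - aeval (x ^ (N - 1)) q) * aeval x f ^ m = 0 := by
  set y := x ^ (N - 1)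
  have hxy : x * y = 1 := by rw [← pow_succ', Nat.sub_add_cancel hN, hx]
  have hyN : y ^ N = 1 := by rw [← pow_mul, mul_comm, pow_mul, hx, one_pow]
  have hyx : y ^ (N - 1) = x := by
    calc y ^ (N - 1) = y ^ (N - 1) * y * x := by rw [mul_assoc, mul_comm y, hxy, mul_one]
      _ = x := by rw [← pow_succ, Nat.sub_add_cancel hN, hyN, one_mul]
  have hqx := congrArg (aeval x) hq
  have hqy := congrArg (aeval y) hq
  simp only [map_sub, map_mul, map_pow, map_one, aeval_comp, aeval_X, hyx] at hqx hqy
  rw [← aeval_mul_pow_natDegree_of_reverse_eq hf hxy] at hqx ⊢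
  linear_combination x ^ (m * f.natDegree) * (hqy - hqx)

theorem AdjoinRoot.root_pow_eq_one_of_dvd {R : Type*} [CommRing R] {g : R[X]} {N : ℕ}
    (h : g ∣ X ^ N - 1) : root g ^ N = 1 := by
  rw [← sub_eq_zero, ← mk_X, ← map_pow, ← map_one (mk g), ← map_sub, mk_eq_zero]
  exact h

section Divisibility

open AdjoinRoot

variable {R : Type*} [CommRing R] {f q b : R[X]} {N : ℕ}

theorem dvd_X_pow_mul_sub_comp [IsDomain R] {a : R[X]} {m : ℕ} (hN : 0 < N) (hf0 : f ≠ 0)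
    (hf : f.reverse = f) (hfN : f ^ (m + 1) ∣ X ^ N - 1)
    (hq : a * a.comp (X ^ (N - 1)) - 1 = q * f ^ m) :
    f ∣ X ^ (m * f.natDegree) * q - q.comp (X ^ (N - 1)) := by
  have key := pow_mul_aeval_sub_aeval_mul_aeval_pow_eq_zero hN hf hq (root_pow_eq_one_of_dvd hfN)
  replace key :
      mk (f ^ (m + 1)) ((X ^ (m * f.natDegree) * q - q.comp (X ^ (N - 1))) * f ^ m) = 0 := by
    rw [← aeval_eq]
    simpa only [map_mul, map_sub, map_pow, aeval_comp, aeval_X] using key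
  rw [mk_eq_zero, pow_succ'] at key
  exact (mul_dvd_mul_iff_right (pow_ne_zero m hf0)).mp key

theorem dvd_comp_sub_X_pow_mul {k : ℕ} (hN : 0 < N) (hf : f.reverse = f) (hfN : f ∣ X ^ N - 1)
    (hq : f ∣ X ^ k * q - q.comp (X ^ (N - 1))) (hb : f ∣ q - b) :
    f ∣ b.comp (X ^ (N - 1)) - X ^ k * b := by
  obtain ⟨c, hc⟩ := hb
  obtain rfl : b = q - f * c := by rw [← hc]; ring
  have hxy : root f * root f ^ (N - 1) = 1 := by
    rw [← pow_succ', Nat.sub_add_cancel hN, root_pow_eq_one_of_dvd hfN]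
  have hfx : aeval (root f) f = 0 := by rw [aeval_eq, mk_self]
  have hfy := aeval_eq_zero_of_reverse_eq hf hxy hfx
  rw [← mk_eq_mk] at hq ⊢
  simp only [← aeval_eq] at hq ⊢
  simp only [map_sub, map_mul, map_pow, aeval_comp, aeval_X, hfx, hfy] at hq ⊢
  linear_combination -hq

end Divisibility

theorem FiniteField.aeval_pow_card_pow {K R : Type*} [Field K] [Fintype K] [CommRing R]
    [Algebra K R] (x : R) (p : K[X]) (e : ℕ) :
    aeval x p ^ Fintype.card K ^ e = aeval (x ^ Fintype.card K ^ e) p := by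
  have := aeval_algHom_apply (frobeniusAlgHom K R ^ e) x p
  simp only [AlgHom.coe_pow, coe_frobeniusAlgHom, pow_iterate] at this
  exact this.symm

namespace AdjoinRoot

variable {F : Type*} [Field F] {f : F[X]} [Fact (Irreducible f)]

theorem root_ne_zero_of_reverse_eq (hf : f.reverse = f) : root f ≠ 0 := by
  intro h
  have h0 := coeff_zero_eq_aeval_zero' (A := AdjoinRoot f) f
  rw [← h, aeval_eq, mk_self] at h0
  have hlc := coeff_zero_reverse f
  rw [hf, (map_eq_zero_iff _ (algebraMap F _).injective).mp h0, eq_comm,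
    leadingCoeff_eq_zero] at hlc
  exact (Fact.out : Irreducible f).ne_zero hlc

theorem root_mul_self_ne_one (hf1 : f.natDegree ≠ 1) : root f * root f ≠ 1 := by
  intro h
  have hf0 := (Fact.out : Irreducible f).ne_zero
  have hroot : root f ∈ (algebraMap F (AdjoinRoot f)).range := by
    rcases mul_self_eq_one_iff.mp h with h | h
    · exact ⟨1, by rw [h, map_one]⟩
    · exact ⟨-1, by rw [h, map_neg, map_one]⟩
  rw [← minpoly.natDegree_eq_one_iff, minpoly_root hf0,
    natDegree_mul_C (inv_ne_zero (leadingCoeff_ne_zero.mpr hf0))] at hroot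
  exact hf1 hroot

variable [Fintype F]

theorem root_pow_card_pow_half_natDegree (hf : f.reverse = f) (heven : Even f.natDegree) :
    root f ^ Fintype.card F ^ (f.natDegree / 2) = (root f)⁻¹ := by
  have hf0 := (Fact.out : Irreducible f).ne_zero
  have := (powerBasis hf0).finite
  have : Finite (AdjoinRoot f) := Module.finite_of_finite F
  have hx0 := root_ne_zero_of_reverse_eq hf
  have hroot : aeval (root f)⁻¹ f = 0 :=
    aeval_eq_zero_of_reverse_eq hf (mul_inv_cancel₀ hx0) (by rw [aeval_eq, mk_self])
  let σ : AdjoinRoot f ≃ₐ[F] AdjoinRoot f :=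
    AlgEquiv.ofBijective (liftAlgHom f (Algebra.ofId F _) _ hroot)
      (Algebra.IsAlgebraic.algHom_bijective _)
  have hσ : σ (root f) = (root f)⁻¹ := liftAlgHom_root f _ _ hroot
  have hσσ : σ ^ 2 = 1 := AlgEquiv.coe_toAlgHom_injective <| algHom_ext <| by
    simp [pow_two, hσ, map_inv₀]
  obtain ⟨⟨j, hj⟩, hj_eq⟩ := (FiniteField.bijective_frobeniusAlgEquivOfAlgebraic_pow F _).2 σ
  dsimp only at hj_eq
  have hdvd : f.natDegree ∣ 2 * j := by
    rw [← powerBasis_dim hf0, ← (powerBasis hf0).finrank,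
      ← FiniteField.orderOf_frobeniusAlgEquivOfAlgebraic]
    exact orderOf_dvd_of_pow_eq_one (by rw [mul_comm, pow_mul, hj_eq, hσσ])
  rw [(powerBasis hf0).finrank, powerBasis_dim] at hj
  have hj0 : j ≠ 0 := by
    rintro rfl
    rw [← hj_eq, pow_zero, AlgEquiv.one_apply] at hσ
    refine root_mul_self_ne_one (fun h ↦ Nat.not_even_one (h ▸ heven)) ?_
    nth_rewrite 2 [hσ]
    exact mul_inv_cancel₀ hx0
  have hj_half : f.natDegree / 2 = j := by
    have := Nat.eq_of_dvd_of_lt_two_mul (by omega) hdvd (by omega)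
    omega
  rw [hj_half, ← hσ, ← hj_eq, AlgEquiv.coe_pow,
    FiniteField.coe_frobeniusAlgEquivOfAlgebraic_iterate]

theorem mk_X_pow_mul_pow_card_pow_half_natDegree {b : F[X]} {m N : ℕ} (hN : 0 < N)
    (hf : f.reverse = f) (heven : Even f.natDegree) (hfN : f ∣ X ^ N - 1)
    (hb : f ∣ b.comp (X ^ (N - 1)) - X ^ (m * f.natDegree) * b) :
    mk f (X ^ (m * (f.natDegree / 2)) * b) ^ Fintype.card F ^ (f.natDegree / 2)
      = mk f (X ^ (m * (f.natDegree / 2)) * b) := by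
  have hfrob := root_pow_card_pow_half_natDegree hf heven
  have hx0 := root_ne_zero_of_reverse_eq hf
  have hinv : root f ^ (N - 1) = (root f)⁻¹ :=
    eq_inv_of_mul_eq_one_left (by rw [pow_sub_one_mul hN.ne', root_pow_eq_one_of_dvd hfN])
  rw [← mk_eq_mk] at hb
  simp only [← aeval_eq, map_mul, map_pow, aeval_comp, aeval_X, hinv] at hb ⊢
  have hmd : m * f.natDegree = m * (f.natDegree / 2) + m * (f.natDegree / 2) := by
    rw [← mul_add, ← two_mul, Nat.two_mul_div_two_of_even heven]
  rw [mul_pow, pow_right_comm, hfrob, FiniteField.aeval_pow_card_pow, hfrob, hb, hmd, pow_add,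
    inv_pow, ← mul_assoc, ← mul_assoc, inv_mul_cancel₀ (pow_ne_zero _ hx0), one_mul]

end AdjoinRoot

theorem stmt_13_general (n : ℕ) (hn0 : 0 < n) (f : Polynomial (ZMod 2))
    (hirr : Irreducible f) (hdeven : Even f.natDegree)
    (hself : f.reverse = f) (hdvd : f ∣ X ^ n - 1)
    (l N s : ℕ) (hN : N = 2 ^ l * n) (hs2 : 2 ≤ s) (hs : s ≤ 2 ^ l)
    (a q b : Polynomial (ZMod 2))
    (hq : a * a.comp (X ^ (N - 1)) - 1 = q * f ^ (s - 1))
    (hb : f ∣ q - b) :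
    (f ∣ b.comp (X ^ (N - 1)) - X ^ ((s - 1) * f.natDegree) * b) ∧
    (Ideal.Quotient.mk (Ideal.span {f}) (X ^ ((s - 1) * (f.natDegree / 2)) * b))
        ^ (2 ^ (f.natDegree / 2))
      = Ideal.Quotient.mk (Ideal.span {f}) (X ^ ((s - 1) * (f.natDegree / 2)) * b) := by
  have : Fact (Irreducible f) := ⟨hirr⟩
  have hN0 : 0 < N := hN ▸ Nat.mul_pos (Nat.two_pow_pos l) hn0
  have hfsN : f ^ (s - 1 + 1) ∣ X ^ N - 1 :=
    (pow_dvd_pow f (by omega)).trans (hN ▸ pow_expChar_pow_dvd_X_pow_mul_sub_one 2 hdvd l)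
  have hfN : f ∣ X ^ N - 1 := (dvd_pow_self f (Nat.succ_ne_zero _)).trans hfsN
  have hbσ := dvd_comp_sub_X_pow_mul hN0 hself hfN
    (dvd_X_pow_mul_sub_comp hN0 hirr.ne_zero hself hfsN hq) hb
  refine ⟨hbσ, ?_⟩
  have := AdjoinRoot.mk_X_pow_mul_pow_card_pow_half_natDegree hN0 hself hdeven hfN hbσ
  rwa [ZMod.card] at this

/-- Let `f` be a self-reciprocal irreducible polynomial over `F_2` of even degree `d`
dividing `x^n - 1` (`n` odd), `N = 2^λ n`, `2 ≤ s ≤ 2^λ`.  If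
`a(x)a(x^(N-1)) ≡ 1 (mod f^(s-1))` with quotient `q`, and `b ≡ q (mod f)`, then
`b(x⁻¹) ≡ x^((s-1)d) b(x) (mod f)`, and consequently `x^((s-1)d/2) b(x)` lies in the
subfield of `F_2[x]/⟨f⟩` of order `2^(d/2)` (the fixed field of `β ↦ β^(2^(d/2))`). -/
theorem stmt_13 (n : ℕ) (hn : Odd n) (hn0 : 0 < n) (f : Polynomial (ZMod 2))
    (hirr : Irreducible f) (hd : 2 ≤ f.natDegree) (hdeven : Even f.natDegree)
    (hself : f.reverse = f) (hdvd : f ∣ X ^ n - 1)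
    (l N s : ℕ) (hl : 1 ≤ l) (hN : N = 2 ^ l * n) (hs2 : 2 ≤ s) (hs : s ≤ 2 ^ l)
    (a q b : Polynomial (ZMod 2))
    (hq : a * a.comp (X ^ (N - 1)) - 1 = q * f ^ (s - 1))
    (hb : f ∣ q - b) :
    (f ∣ b.comp (X ^ (N - 1)) - X ^ ((s - 1) * f.natDegree) * b) ∧
    (Ideal.Quotient.mk (Ideal.span {f}) (X ^ ((s - 1) * (f.natDegree / 2)) * b))
        ^ (2 ^ (f.natDegree / 2))
      = Ideal.Quotient.mk (Ideal.span {f}) (X ^ ((s - 1) * (f.natDegree / 2)) * b) :=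
  stmt_13_general n hn0 f hirr hdeven hself hdvd l N s hN hs2 hs a q b hq hb
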